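/- Fix d ≥ 1, a ∈ ℝ, c₁ > 0, γ₁ ∈ (0,1], an accuracy ε ∈ (0, c₁/(132d·2^{3+γ₁})), and let κ := (c₁/(528d))^{d/(1+γ₁)}. Then for every positive integer n < κ/ε^{d/(1+γ₁)} and every deterministic algorithm A, there exists a (c₁,γ₁)-gradient-Hölder function f : [0,1]^d → ℝ such that the output S_n of A run on f after n queries is not an ε-approximation of the level set {f = a}. -/

import Mathlib

noncomputable section

def unitCube (d : ℕ) : Set (Fin d → ℝ) := Set.Icc 0 1

/-- A deterministic sequential algorithm. -/
structure Algorithm (d : ℕ) where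
  query : (n : ℕ) → (Fin n → ℝ) → (Fin d → ℝ)
  query_mem : ∀ n h, query n h ∈ unitCube d
  output : (n : ℕ) → (Fin n → ℝ) → Set (Fin d → ℝ)
  output_sub : ∀ n h, output n h ⊆ unitCube d

/-- The `(n+1)`-st query point of algorithm `A` run on `f`. -/
noncomputable def Algorithm.point {d : ℕ} (A : Algorithm d) (f : (Fin d → ℝ) → ℝ) :
    ℕ → (Fin d → ℝ)
  | n => A.query n fun i : Fin n => f (Algorithm.point A f i)
termination_by n => n
decreasing_by exact i.isLt

/-- The output set of algorithm `A` run on `f` after `n` queries. -/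
def Algorithm.outputAfter {d : ℕ} (A : Algorithm d) (f : (Fin d → ℝ) → ℝ) (n : ℕ) :
    Set (Fin d → ℝ) :=
  A.output n fun i : Fin n => f (A.point f i)

def IsEpsApprox (d : ℕ) (f : (Fin d → ℝ) → ℝ) (a ε : ℝ) (S : Set (Fin d → ℝ)) : Prop :=
  {x ∈ unitCube d | f x = a} ⊆ S ∧ S ⊆ {x ∈ unitCube d | |f x - a| ≤ ε}

/-- The `j`-th partial derivatives of `F`, collected into a vector of `Fin d → ℝ`. -/
noncomputable def gradVec (d : ℕ) (F : (Fin d → ℝ) → ℝ) (x : Fin d → ℝ) : Fin d → ℝ :=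
  fun j => fderiv ℝ F x (Pi.single j 1)

/-- `f` is `(c₁,γ₁)`-gradient-Hölder on `E`: it is the restriction to `E` of a `C¹` function
on `ℝ^d` whose gradient is `(c₁,γ₁)`-Hölder on `E` w.r.t. the sup-norm. -/
def GradHolderOn (d : ℕ) (c₁ γ₁ : ℝ) (E : Set (Fin d → ℝ)) (f : (Fin d → ℝ) → ℝ) : Prop :=
  ∃ F : (Fin d → ℝ) → ℝ, ContDiff ℝ 1 F ∧ Set.EqOn f F E ∧
    ∀ x ∈ E, ∀ y ∈ E, ‖gradVec d F x - gradVec d F y‖ ≤ c₁ * ‖x - y‖ ^ γ₁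


open Set

/-!
Adversary argument. Run the algorithm on the constant function `a`, whose level set is the whole
cube; if the output does not contain the whole cube, it is not an approximation of that level set.
Otherwise, since `n < m ^ d`, one of the `m ^ d` cells of side `1 / m` has its centre `z` at
sup-distance at least `1 / (2m)` from every query point. The bump `a + 2ε ∏ₖ ψ(2m (xₖ - zₖ))`,
with the `C¹` profile `ψ(t) = max (1 - t²) 0 ^ 2`, equals `a` at all queries, so the algorithm
produces the same output, which contains `z` although the bump exceeds `a` by `2ε` there. Its
gradient is bounded by `8ε·2m` and `32dε(2m)²`-Lipschitz, hence `(32dε(2m)^(1+γ), γ)`-Hölder,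
and the choice of `m` keeps this constant below `c₁`.
-/
theorem hasDerivAt_max_zero_sq (x : ℝ) : HasDerivAt (fun y : ℝ => max y 0 ^ 2) (2 * max x 0) x := by
  rcases lt_trichotomy x 0 with hx | rfl | hx
  · have hloc : (fun y : ℝ => max y 0 ^ 2) =ᶠ[nhds x] fun _ => 0 := by
      filter_upwards [Iio_mem_nhds hx] with y hy
      simp [max_eq_right (mem_Iio.mp hy).le]
    simpa [max_eq_right hx.le] using (hasDerivAt_const x (0 : ℝ)).congr_of_eventuallyEq hloc
  · have hright : HasDerivWithinAt (fun y : ℝ => max y 0 ^ 2) 0 (Ici 0) 0 := by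
      refine ((hasDerivAt_pow 2 (0 : ℝ)).hasDerivWithinAt.congr (fun y hy => ?_) ?_).congr_deriv ?_
      · simp [max_eq_left (mem_Ici.mp hy)]
      · simp
      · simp
    have hleft : HasDerivWithinAt (fun y : ℝ => max y 0 ^ 2) 0 (Iic 0) 0 :=
      (hasDerivWithinAt_const (0 : ℝ) _ (0 : ℝ)).congr (fun y hy => by
        simp [max_eq_right (mem_Iic.mp hy)]) (by simp)
    simpa [Iic_union_Ici] using hleft.union hright
  · have hloc : (fun y : ℝ => max y 0 ^ 2) =ᶠ[nhds x] fun y => y ^ 2 := by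
      filter_upwards [Ioi_mem_nhds hx] with y hy
      simp [max_eq_left (mem_Ioi.mp hy).le]
    simpa [max_eq_left hx.le] using (hasDerivAt_pow 2 x).congr_of_eventuallyEq hloc

def profile (t : ℝ) : ℝ := max (1 - t ^ 2) 0 ^ 2

def profileSlope (t : ℝ) : ℝ := t * max (1 - t ^ 2) 0

theorem hasDerivAt_profile (t : ℝ) : HasDerivAt profile (-4 * profileSlope t) t := by
  have hinner : HasDerivAt (fun t : ℝ => 1 - t ^ 2) (-(2 * t)) t := by
    simpa using (hasDerivAt_pow 2 t).const_sub 1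
  refine ((hasDerivAt_max_zero_sq _).comp t hinner).congr_deriv ?_
  simp only [profileSlope]; ring

theorem continuous_profileSlope : Continuous profileSlope := by
  unfold profileSlope; fun_prop

theorem contDiff_profile : ContDiff ℝ 1 profile := by
  rw [contDiff_one_iff_deriv]
  refine ⟨fun t => (hasDerivAt_profile t).differentiableAt, ?_⟩
  rw [funext fun t => (hasDerivAt_profile t).deriv]
  exact continuous_profileSlope.const_mul _

theorem profile_zero : profile 0 = 1 := by norm_num [profile]

theorem profile_eq_zero {t : ℝ} (ht : 1 ≤ |t|) : profile t = 0 := by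
  have : 1 ≤ t ^ 2 := by nlinarith [sq_abs t]
  simp [profile, max_eq_right (sub_nonpos.mpr this)]

theorem abs_profile_le_one (t : ℝ) : |profile t| ≤ 1 := by
  have h₀ : 0 ≤ max (1 - t ^ 2) 0 := le_max_right _ _
  have h₁ : max (1 - t ^ 2) 0 ≤ 1 := max_le (by nlinarith [sq_nonneg t]) zero_le_one
  rw [profile, abs_of_nonneg (by positivity)]
  nlinarith

theorem abs_profileSlope_le_one (t : ℝ) : |profileSlope t| ≤ 1 := by
  rw [profileSlope, abs_mul, abs_of_nonneg (show (0 : ℝ) ≤ max (1 - t ^ 2) 0 from le_max_right _ _)]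
  rcases le_total (t ^ 2) 1 with ht | ht
  · rw [max_eq_left (by linarith)]
    have : |t| ≤ 1 := by nlinarith [sq_abs t, abs_nonneg t]
    nlinarith [abs_nonneg t, sq_nonneg t]
  · simp [max_eq_right (sub_nonpos.mpr ht)]

theorem lipschitzWith_profile : LipschitzWith 4 profile := by
  refine lipschitzWith_of_nnnorm_deriv_le (fun t => (hasDerivAt_profile t).differentiableAt)
    fun t => ?_
  rw [(hasDerivAt_profile t).deriv, ← NNReal.coe_le_coe, coe_nnnorm, Real.norm_eq_abs, abs_mul,
    abs_neg, show |(4 : ℝ)| = 4 from abs_of_pos four_pos, NNReal.coe_ofNat]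
  linarith [abs_profileSlope_le_one t]

/-- Outside `[-1, 1]` the slope vanishes, so it factors through the projection onto `[-1, 1]`,
where it is the polynomial `t - t ^ 3`. -/
theorem lipschitzWith_profileSlope : LipschitzWith 2 profileSlope := by
  have hon : LipschitzOnWith 2 profileSlope (Icc (-1) 1) := by
    refine LipschitzOnWith.of_dist_le_mul fun s hs t ht => ?_
    have hs2 : s ^ 2 ≤ 1 := by nlinarith [hs.1, hs.2]
    have ht2 : t ^ 2 ≤ 1 := by nlinarith [ht.1, ht.2]
    rw [Real.dist_eq, Real.dist_eq, profileSlope, profileSlope, max_eq_left (by linarith),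
      max_eq_left (by linarith),
      show s * (1 - s ^ 2) - t * (1 - t ^ 2) = (s - t) * (1 - (s ^ 2 + s * t + t ^ 2)) by ring,
      abs_mul, mul_comm]
    gcongr
    rw [abs_le]; push_cast; constructor <;> nlinarith [sq_nonneg (s + t), sq_nonneg (s - t)]
  have hvanish : ∀ t : ℝ, 1 < |t| → profileSlope t = 0 := fun t ht => by
    have : 1 ≤ t ^ 2 := by nlinarith [sq_abs t, abs_nonneg t]
    simp [profileSlope, max_eq_right (sub_nonpos.mpr this)]
  have hext : IccExtend (by norm_num : (-1 : ℝ) ≤ 1) ((Icc (-1) 1).domRestrict profileSlope) =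
      profileSlope := by
    refine IccExtend_eq_self _ _ (fun t ht => ?_) (fun t ht => ?_)
    · rw [hvanish t (by rw [abs_of_neg (by linarith)]; linarith)]
      norm_num [profileSlope]
    · rw [hvanish t (by rw [abs_of_pos (by linarith)]; linarith)]
      norm_num [profileSlope]
  have := hon.to_restrict.comp (LipschitzWith.projIcc (by norm_num : (-1 : ℝ) ≤ 1))
  rwa [mul_one, ← IccExtend, hext] at this

theorem abs_prod_sub_prod_le {ι : Type*} (s : Finset ι) {f g : ι → ℝ}
    (hf : ∀ i ∈ s, |f i| ≤ 1) (hg : ∀ i ∈ s, |g i| ≤ 1) :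
    |∏ i ∈ s, f i - ∏ i ∈ s, g i| ≤ ∑ i ∈ s, |f i - g i| := by
  classical
  induction s using Finset.induction_on with
  | empty => simp
  | insert j s hj ih =>
    rw [Finset.forall_mem_insert] at hf hg
    rw [Finset.prod_insert hj, Finset.prod_insert hj, Finset.sum_insert hj]
    have hgs : |∏ i ∈ s, g i| ≤ 1 := by
      rw [Finset.abs_prod]; exact Finset.prod_le_one (fun _ _ => abs_nonneg _) hg.2
    calc |f j * ∏ i ∈ s, f i - g j * ∏ i ∈ s, g i|
        = |f j * (∏ i ∈ s, f i - ∏ i ∈ s, g i) + (f j - g j) * ∏ i ∈ s, g i| := by ring_nf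
      _ ≤ |f j| * |∏ i ∈ s, f i - ∏ i ∈ s, g i| + |f j - g j| * |∏ i ∈ s, g i| := by
        rw [← abs_mul, ← abs_mul]; exact abs_add_le _ _
      _ ≤ 1 * ∑ i ∈ s, |f i - g i| + |f j - g j| * 1 := by
        gcongr
        exacts [hf.1, ih hf.2 hg.2]
      _ = |f j - g j| + ∑ i ∈ s, |f i - g i| := by ring

theorem abs_prod_apply_sub_prod_apply_le {ι : Type*} [Fintype ι] {φ : ι → ℝ → ℝ} {L : NNReal}
    (hφ : ∀ k t, |φ k t| ≤ 1) (hL : ∀ k, LipschitzWith L (φ k)) (u v : ι → ℝ) :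
    |∏ k, φ k (u k) - ∏ k, φ k (v k)| ≤ Fintype.card ι * L * ‖u - v‖ :=
  calc |∏ k, φ k (u k) - ∏ k, φ k (v k)|
      ≤ ∑ k, |φ k (u k) - φ k (v k)| :=
        abs_prod_sub_prod_le _ (fun k _ => hφ k _) (fun k _ => hφ k _)
    _ ≤ ∑ _k : ι, L * ‖u - v‖ := Finset.sum_le_sum fun k _ => by
        simpa [← Real.dist_eq, ← dist_eq_norm] using
          ((hL k).dist_le_mul (u k) (v k)).trans (by gcongr; exact dist_le_pi_dist u v k)
    _ = Fintype.card ι * L * ‖u - v‖ := by simp [mul_assoc]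

theorem min_le_rpow {s γ : ℝ} (hs : 0 ≤ s) (hγ₀ : 0 ≤ γ) (hγ₁ : γ ≤ 1) : min s 1 ≤ s ^ γ := by
  rcases le_total s 1 with hs₁ | hs₁
  · simpa [hs₁] using Real.rpow_le_rpow_of_exponent_ge' hs hs₁ hγ₀ hγ₁
  · simpa [hs₁] using Real.one_le_rpow hs₁ hγ₀

section Bump

variable {d : ℕ}

def unitBump (d : ℕ) (u : Fin d → ℝ) : ℝ := ∏ k, profile (u k)

theorem unitBump_zero : unitBump d 0 = 1 := by simp [unitBump, profile_zero]

theorem unitBump_eq_zero {u : Fin d → ℝ} (hu : 1 ≤ ‖u‖) : unitBump d u = 0 := by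
  obtain ⟨k, hk⟩ : ∃ k, 1 ≤ |u k| := by
    by_contra! h
    exact hu.not_gt ((pi_norm_lt_iff one_pos).2 h)
  exact Finset.prod_eq_zero (Finset.mem_univ k) (profile_eq_zero hk)

theorem contDiff_unitBump : ContDiff ℝ 1 (unitBump d) :=
  contDiff_prod fun k _ => contDiff_profile.comp (contDiff_apply ℝ ℝ k)

theorem gradVec_unitBump (u : Fin d → ℝ) (j : Fin d) :
    gradVec d (unitBump d) u j =
      -4 * ∏ k, Function.update (fun _ => profile) j profileSlope k (u k) := by
  classical
  have hderiv : HasFDerivAt (fun u : Fin d → ℝ => ∏ k, profile (u k))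
      (∑ k, (∏ l ∈ Finset.univ.erase k, profile (u l)) •
        (-4 * profileSlope (u k)) • ContinuousLinearMap.proj k) u :=
    HasFDerivAt.finsetProd fun k _ =>
      HasDerivAt.comp_hasFDerivAt (f := fun v : Fin d → ℝ => v k) u (hasDerivAt_profile (u k))
        (hasFDerivAt_apply (𝕜 := ℝ) (F' := fun _ : Fin d => ℝ) k u)
  rw [gradVec, show unitBump d = fun u => ∏ k, profile (u k) from rfl, hderiv.fderiv,
    ← Finset.mul_prod_erase _ _ (Finset.mem_univ j), Function.update_self,
    Finset.prod_congr rfl fun k hk =>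
      congrFun (Function.update_of_ne (Finset.ne_of_mem_erase hk) _ _) (u k)]
  simp only [sum_apply, smul_apply, ContinuousLinearMap.proj_apply, Pi.single_apply, smul_eq_mul,
    mul_ite, mul_one, mul_zero, Finset.sum_ite_eq', Finset.mem_univ, ↓reduceIte]
  ring

theorem abs_update_profile_le_one (j k : Fin d) (t : ℝ) :
    |Function.update (fun _ => profile) j profileSlope k t| ≤ 1 := by
  rcases eq_or_ne k j with rfl | hk
  · simpa using abs_profileSlope_le_one t
  · simpa [Function.update_of_ne hk] using abs_profile_le_one t

theorem lipschitzWith_update_profile (j k : Fin d) :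
    LipschitzWith 4 (Function.update (fun _ => profile) j profileSlope k) := by
  rcases eq_or_ne k j with rfl | hk
  · simpa using lipschitzWith_profileSlope.weaken (by norm_num)
  · simpa [Function.update_of_ne hk] using lipschitzWith_profile

theorem abs_gradVec_unitBump_le (u : Fin d → ℝ) (j : Fin d) :
    |gradVec d (unitBump d) u j| ≤ 4 := by
  rw [gradVec_unitBump, abs_mul, Finset.abs_prod, abs_neg,
    show |(4 : ℝ)| = 4 from abs_of_pos four_pos]
  exact mul_le_of_le_one_right zero_le_four <|
    Finset.prod_le_one (fun _ _ => abs_nonneg _) fun k _ => abs_update_profile_le_one j k _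

theorem abs_gradVec_unitBump_sub_le (u v : Fin d → ℝ) (j : Fin d) :
    |gradVec d (unitBump d) u j - gradVec d (unitBump d) v j| ≤ 16 * d * ‖u - v‖ := by
  have hprod := abs_prod_apply_sub_prod_apply_le (abs_update_profile_le_one j)
    (lipschitzWith_update_profile j) u v
  rw [Fintype.card_fin] at hprod
  rw [gradVec_unitBump, gradVec_unitBump, ← mul_sub, abs_mul, abs_neg,
    show |(4 : ℝ)| = 4 from abs_of_pos four_pos]
  push_cast at hprod
  linarith

theorem norm_gradVec_unitBump_sub_le (u v : Fin d → ℝ) :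
    ‖gradVec d (unitBump d) u - gradVec d (unitBump d) v‖ ≤ 16 * d * min ‖u - v‖ 1 := by
  refine (pi_norm_le_iff_of_nonneg (by positivity)).2 fun j => ?_
  have hd : (1 : ℝ) ≤ d := Nat.one_le_cast.mpr j.pos
  rw [Pi.sub_apply, Real.norm_eq_abs, mul_min_of_nonneg _ _ (by positivity), mul_one]
  refine le_min (abs_gradVec_unitBump_sub_le u v j) ?_
  calc |gradVec d (unitBump d) u j - gradVec d (unitBump d) v j|
      ≤ |gradVec d (unitBump d) u j| + |gradVec d (unitBump d) v j| := abs_sub _ _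
    _ ≤ 4 + 4 := add_le_add (abs_gradVec_unitBump_le u j) (abs_gradVec_unitBump_le v j)
    _ ≤ 16 * d := by linarith

/-- `σ` is the inverse radius: the bump is supported in the sup-ball of radius `σ⁻¹`
around `z`. -/
def bumpAt (d : ℕ) (a h σ : ℝ) (z x : Fin d → ℝ) : ℝ := a + h * unitBump d (σ • (x - z))

variable {a h σ : ℝ} {z : Fin d → ℝ}

theorem bumpAt_self : bumpAt d a h σ z z = a + h := by simp [bumpAt, unitBump_zero]

theorem bumpAt_eq_of_inv_le_norm {x : Fin d → ℝ} (hσ : 0 < σ) (hx : σ⁻¹ ≤ ‖x - z‖) :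
    bumpAt d a h σ z x = a := by
  rw [bumpAt, unitBump_eq_zero, mul_zero, add_zero]
  rw [norm_smul, Real.norm_of_nonneg hσ.le]
  exact (inv_le_iff_one_le_mul₀' hσ).1 hx

theorem contDiff_bumpAt : ContDiff ℝ 1 (bumpAt d a h σ z) :=
  contDiff_const.add <| contDiff_const.mul <|
    contDiff_unitBump.comp <| (contDiff_id.sub contDiff_const).const_smul σ

theorem gradVec_bumpAt (x : Fin d → ℝ) :
    gradVec d (bumpAt d a h σ z) x = (h * σ) • gradVec d (unitBump d) (σ • (x - z)) := by
  have hinner : HasFDerivAt (fun x : Fin d → ℝ => σ • (x - z))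
      (σ • ContinuousLinearMap.id ℝ (Fin d → ℝ)) x :=
    ((hasFDerivAt_id x).sub_const z).const_smul σ
  have hbump : HasFDerivAt (bumpAt d a h σ z)
      (h • (fderiv ℝ (unitBump d) (σ • (x - z))).comp (σ • ContinuousLinearMap.id ℝ _)) x :=
    (((contDiff_unitBump.differentiable one_ne_zero _).hasFDerivAt.comp x hinner).const_mul
      h).const_add a
  funext j
  rw [gradVec, hbump.fderiv]
  simp only [ContinuousLinearMap.comp_smulₛₗ, Real.ringHom_apply, ContinuousLinearMap.comp_id,
    smul_apply, smul_eq_mul, Pi.smul_apply, gradVec]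
  ring

theorem norm_gradVec_bumpAt_sub_le {γ : ℝ} (hh : 0 ≤ h) (hσ : 0 ≤ σ) (hγ₀ : 0 ≤ γ) (hγ₁ : γ ≤ 1)
    (x y : Fin d → ℝ) :
    ‖gradVec d (bumpAt d a h σ z) x - gradVec d (bumpAt d a h σ z) y‖ ≤
      16 * d * h * σ ^ (1 + γ) * ‖x - y‖ ^ γ := by
  have hscale : σ • (x - z) - σ • (y - z) = σ • (x - y) := by
    rw [← smul_sub, sub_sub_sub_cancel_right]
  calc ‖gradVec d (bumpAt d a h σ z) x - gradVec d (bumpAt d a h σ z) y‖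
      = h * σ * ‖gradVec d (unitBump d) (σ • (x - z)) - gradVec d (unitBump d) (σ • (y - z))‖ := by
        rw [gradVec_bumpAt, gradVec_bumpAt, ← smul_sub, norm_smul,
          Real.norm_of_nonneg (by positivity)]
    _ ≤ h * σ * (16 * d * min (σ * ‖x - y‖) 1) := by
        gcongr
        have := norm_gradVec_unitBump_sub_le (σ • (x - z)) (σ • (y - z))
        rwa [hscale, norm_smul, Real.norm_of_nonneg hσ] at this
    _ ≤ h * σ * (16 * d * (σ * ‖x - y‖) ^ γ) := by
        gcongr
        exact min_le_rpow (by positivity) hγ₀ hγ₁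
    _ = 16 * d * h * σ ^ (1 + γ) * ‖x - y‖ ^ γ := by
        rw [Real.mul_rpow hσ (norm_nonneg _), Real.rpow_one_add' hσ (by linarith)]
        ring

theorem gradHolderOn_bumpAt {c₁ γ : ℝ} (E : Set (Fin d → ℝ)) (hh : 0 ≤ h) (hσ : 0 ≤ σ)
    (hγ₀ : 0 ≤ γ) (hγ₁ : γ ≤ 1) (hc₁ : 16 * d * h * σ ^ (1 + γ) ≤ c₁) :
    GradHolderOn d c₁ γ E (bumpAt d a h σ z) :=
  ⟨_, contDiff_bumpAt, fun _ _ => rfl, fun x _ y _ =>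
    (norm_gradVec_bumpAt_sub_le hh hσ hγ₀ hγ₁ x y).trans (by gcongr)⟩

theorem gradVec_const (x : Fin d → ℝ) : gradVec d (fun _ => a) x = 0 :=
  funext fun j => by simp [gradVec]

theorem gradHolderOn_const {c₁ γ : ℝ} (E : Set (Fin d → ℝ)) (hc₁ : 0 ≤ c₁) :
    GradHolderOn d c₁ γ E fun _ => a :=
  ⟨fun _ => a, contDiff_const, fun _ _ => rfl, fun x _ y _ => by
    rw [gradVec_const, gradVec_const, sub_zero, norm_zero]
    positivity⟩

end Bump

section Grid

variable {d : ℕ}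

namespace Algorithm

variable (A : Algorithm d) {f g : (Fin d → ℝ) → ℝ} {n : ℕ}

theorem point_congr (hfg : ∀ k < n, f (A.point f k) = g (A.point f k)) {k : ℕ} (hk : k < n) :
    A.point g k = A.point f k := by
  induction k using Nat.strong_induction_on with
  | _ k ih =>
    rw [point, point]
    congr 1
    funext i
    rw [ih i i.isLt (i.isLt.trans hk), ← hfg i (i.isLt.trans hk)]

theorem outputAfter_congr (hfg : ∀ k < n, f (A.point f k) = g (A.point f k)) :
    A.outputAfter g n = A.outputAfter f n := by
  rw [outputAfter, outputAfter]
  congr 1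
  funext i
  rw [A.point_congr hfg i.isLt, ← hfg i i.isLt]

end Algorithm

/-- The centre of the cell indexed by `c` in the partition of the unit cube into `m ^ d` cubes of
side `1 / m`. -/
def gridCenter (m : ℕ) (c : Fin d → Fin m) : Fin d → ℝ := fun j => (2 * (c j : ℝ) + 1) / (2 * m)

theorem gridCenter_mem_unitCube {m : ℕ} (c : Fin d → Fin m) : gridCenter m c ∈ unitCube d := by
  refine ⟨fun j => by simp only [gridCenter, Pi.zero_apply]; positivity, fun j => ?_⟩
  have hm : (0 : ℝ) < m := Nat.cast_pos.mpr (c j).pos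
  have hc : (c j : ℝ) + 1 ≤ m := by exact_mod_cast (c j).isLt
  simp only [gridCenter, Pi.one_apply]
  rw [div_le_one (by positivity)]
  linarith

theorem inv_le_norm_gridCenter_sub {m : ℕ} {c c' : Fin d → Fin m} (hcc' : c ≠ c') :
    (m : ℝ)⁻¹ ≤ ‖gridCenter m c - gridCenter m c'‖ := by
  obtain ⟨j, hj⟩ := Function.ne_iff.mp hcc'
  have hm : (0 : ℝ) < m := Nat.cast_pos.mpr (c j).pos
  have hsep : (1 : ℝ) ≤ |(c j : ℝ) - c' j| := by
    have : ((c j : ℕ) : ℤ) - (c' j : ℕ) ≠ 0 := sub_ne_zero.2 (by exact_mod_cast Fin.val_ne_of_ne hj)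
    exact_mod_cast Int.one_le_abs this
  calc (m : ℝ)⁻¹ ≤ |(c j : ℝ) - c' j| / m := by rw [inv_eq_one_div]; gcongr
    _ = ‖(gridCenter m c - gridCenter m c') j‖ := by
        have : (gridCenter m c - gridCenter m c') j = ((c j : ℝ) - c' j) / m := by
          simp only [Pi.sub_apply, gridCenter]
          field_simp
          ring
        rw [this, Real.norm_eq_abs, abs_div, abs_of_pos hm]
    _ ≤ ‖gridCenter m c - gridCenter m c'‖ := norm_le_pi_norm _ j

/-- Pigeonhole: `n < m ^ d` points cannot come within `1 / (2m)` of every one of the `m ^ d`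
grid centres, which are `1 / m` apart. -/
theorem exists_mem_unitCube_forall_inv_le_norm_sub {m n : ℕ} (hnm : n < m ^ d)
    (p : Fin n → Fin d → ℝ) : ∃ z ∈ unitCube d, ∀ i, (2 * m : ℝ)⁻¹ ≤ ‖p i - z‖ := by
  by_contra! hnear
  choose φ hφ using fun c => hnear _ (gridCenter_mem_unitCube (m := m) c)
  obtain ⟨c, c', hcc', hφc⟩ := Fintype.exists_ne_map_eq_of_card_lt φ (by simpa using hnm)
  have hclose : ‖gridCenter m c - gridCenter m c'‖ < (m : ℝ)⁻¹ :=
    calc ‖gridCenter m c - gridCenter m c'‖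
        ≤ ‖gridCenter m c - p (φ c)‖ + ‖p (φ c) - gridCenter m c'‖ :=
          norm_sub_le_norm_sub_add_norm_sub _ _ _
      _ = ‖p (φ c) - gridCenter m c‖ + ‖p (φ c') - gridCenter m c'‖ := by
          rw [norm_sub_rev, hφc]
      _ < (2 * m : ℝ)⁻¹ + (2 * m : ℝ)⁻¹ := add_lt_add (hφ c) (hφ c')
      _ = (m : ℝ)⁻¹ := by ring
  exact (inv_le_norm_gridCenter_sub hcc').not_gt hclose

/-- With `K = c₁ / (528 d)`, `q = 1 + γ` and `R = (K / ε) ^ (1 / q) > 2`, the grid size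
`m = ⌈R⌉` satisfies `n < R ^ d ≤ m ^ d` and `(2m) ^ q ≤ (3R) ^ q ≤ 9 K / ε`. -/
theorem exists_gridSize {n : ℕ} {c₁ γ ε : ℝ} (hd : 1 ≤ d) (hc : 0 < c₁) (hγ : γ ∈ Ioc (0 : ℝ) 1)
    (hε₀ : 0 < ε) (hε₁ : ε < c₁ / (132 * (d : ℝ) * (2 : ℝ) ^ (3 + γ)))
    (hn : (n : ℝ) < (c₁ / (528 * (d : ℝ))) ^ ((d : ℝ) / (1 + γ)) / ε ^ ((d : ℝ) / (1 + γ))) :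
    ∃ m : ℕ, n < m ^ d ∧ 16 * d * (2 * ε) * (2 * m : ℝ) ^ (1 + γ) ≤ c₁ := by
  have hd₀ : (0 : ℝ) < d := Nat.cast_pos.mpr hd
  set q := 1 + γ
  have hq : 0 < q := by linarith [hγ.1]
  set K := c₁ / (528 * (d : ℝ)) with hK
  have hKε : (2 : ℝ) ^ q < K / ε := by
    have h2 : (2 : ℝ) ^ (3 + γ) = 4 * 2 ^ q := by
      rw [show 3 + γ = 2 + q by ring, Real.rpow_add two_pos]; norm_num
    rw [h2, show c₁ / (132 * d * (4 * 2 ^ q)) = K / 2 ^ q by rw [hK]; field_simp; ring,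
      lt_div_iff₀ (by positivity)] at hε₁
    rwa [lt_div_iff₀ hε₀, mul_comm]
  have hK₀ : 0 < K / ε := (Real.rpow_pos_of_pos two_pos q).trans hKε
  set R := (K / ε) ^ q⁻¹ with hR
  have hR₂ : 2 < R := by
    calc (2 : ℝ) = ((2 : ℝ) ^ q) ^ q⁻¹ := (Real.rpow_rpow_inv zero_le_two hq.ne').symm
      _ < R := Real.rpow_lt_rpow (by positivity) hKε (inv_pos.mpr hq)
  have hnR : (n : ℝ) < R ^ d := by
    rwa [← Real.div_rpow (by positivity) hε₀.le, show (d : ℝ) / q = q⁻¹ * d by ring,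
      Real.rpow_mul hK₀.le, Real.rpow_natCast] at hn
  refine ⟨⌈R⌉₊, ?_, ?_⟩
  · exact_mod_cast hnR.trans_le (pow_le_pow_left₀ (by positivity) (Nat.le_ceil R) d)
  · have hm : 2 * (⌈R⌉₊ : ℝ) ≤ 3 * R := by linarith [Nat.ceil_lt_add_one (by positivity : 0 ≤ R)]
    have h3 : (3 : ℝ) ^ q ≤ 9 := by
      calc (3 : ℝ) ^ q ≤ 3 ^ (2 : ℝ) :=
            Real.rpow_le_rpow_of_exponent_le (by norm_num) (by linarith [hγ.2])
        _ = 9 := by norm_num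
    have hpow : (2 * (⌈R⌉₊ : ℝ)) ^ q ≤ 9 * (K / ε) :=
      calc (2 * (⌈R⌉₊ : ℝ)) ^ q ≤ (3 * R) ^ q := by gcongr
        _ = 3 ^ q * (K / ε) := by
            rw [Real.mul_rpow (by norm_num) (by positivity), hR,
              Real.rpow_inv_rpow hK₀.le hq.ne']
        _ ≤ 9 * (K / ε) := by gcongr
    calc 16 * d * (2 * ε) * (2 * (⌈R⌉₊ : ℝ)) ^ q ≤ 16 * d * (2 * ε) * (9 * (K / ε)) := by
          gcongr
      _ = 288 / 528 * c₁ := by rw [hK]; field_simp; ring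
      _ ≤ c₁ := by linarith

end Grid

theorem stmt11_general (d : ℕ) (hd : 1 ≤ d) (a c₁ γ₁ ε : ℝ) (hc : 0 < c₁)
    (hγ : γ₁ ∈ Set.Ioc (0 : ℝ) 1)
    (hε0 : 0 < ε) (hε1 : ε < c₁ / (132 * (d : ℝ) * (2 : ℝ) ^ (3 + γ₁)))
    (n : ℕ)
    (hnκ : (n : ℝ) < (c₁ / (528 * (d : ℝ))) ^ ((d : ℝ) / (1 + γ₁)) / ε ^ ((d : ℝ) / (1 + γ₁)))
    (A : Algorithm d) :
    ∃ f : (Fin d → ℝ) → ℝ, GradHolderOn d c₁ γ₁ (unitCube d) f ∧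
      ¬ IsEpsApprox d f a ε (A.outputAfter f n) := by
  obtain ⟨m, hnm, hbudget⟩ := exists_gridSize hd hc hγ hε0 hε1 hnκ
  have hm : (0 : ℝ) < 2 * m := by
    have : m ≠ 0 := by rintro rfl; simp [zero_pow (by omega : d ≠ 0)] at hnm
    positivity
  let f₀ : (Fin d → ℝ) → ℝ := fun _ => a
  obtain ⟨z, hz, hfar⟩ := exists_mem_unitCube_forall_inv_le_norm_sub hnm fun i => A.point f₀ i
  by_cases hcube : unitCube d ⊆ A.outputAfter f₀ n
  · set f := bumpAt d a (2 * ε) (2 * m) z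
    have hout : A.outputAfter f n = A.outputAfter f₀ n :=
      A.outputAfter_congr fun k hk => (bumpAt_eq_of_inv_le_norm hm (hfar ⟨k, hk⟩)).symm
    refine ⟨f, gradHolderOn_bumpAt _ (by positivity) hm.le hγ.1.le hγ.2 hbudget, fun hS => ?_⟩
    have hfz := (hS.2 (hout ▸ hcube hz)).2
    rw [show f z = a + 2 * ε from bumpAt_self, add_sub_cancel_left,
      abs_of_pos (by positivity)] at hfz
    linarith
  · exact ⟨f₀, gradHolderOn_const _ hc.le, fun hS => hcube fun x hx => hS.1 ⟨hx, rfl⟩⟩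

/-- Lower bound for gradient-Hölder functions: for
`ε ∈ (0, c₁/(132d·2^{3+γ₁}))`, `κ = (c₁/(528d))^{d/(1+γ₁)}`, every positive
`n < κ/ε^{d/(1+γ₁)}` and every deterministic algorithm `A`, there is a
`(c₁,γ₁)`-gradient-Hölder `f` such that the output of `A` run on `f` after `n` queries
is not an `ε`-approximation of `{f = a}`. -/
theorem stmt11 (d : ℕ) (hd : 1 ≤ d) (a c₁ γ₁ ε : ℝ) (hc : 0 < c₁)
    (hγ : γ₁ ∈ Set.Ioc (0 : ℝ) 1)
    (hε0 : 0 < ε) (hε1 : ε < c₁ / (132 * (d : ℝ) * (2 : ℝ) ^ (3 + γ₁)))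
    (n : ℕ) (hn : 0 < n)
    (hnκ : (n : ℝ) < (c₁ / (528 * (d : ℝ))) ^ ((d : ℝ) / (1 + γ₁)) / ε ^ ((d : ℝ) / (1 + γ₁)))
    (A : Algorithm d) :
    ∃ f : (Fin d → ℝ) → ℝ, GradHolderOn d c₁ γ₁ (unitCube d) f ∧
      ¬ IsEpsApprox d f a ε (A.outputAfter f n) :=
  stmt11_general d hd a c₁ γ₁ ε hc hγ hε0 hε1 n hnκ A
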